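/- arXiv:2104.11003 — 2 statements merged into one kernel-verified Lean document; each statement's English description precedes it below -/
import Mathlib

section
/- The map φ is injective on L(3,n) \ E_{3,n}: if λ, μ ∈ L(3,n) \ E_{3,n} and φ(λ) = φ(μ), then λ = μ. -/
/-!
A point of `E_{3,m}` has the form `(m, m - 2k, m - 4k - ℓ)`. Hence two points of `E_{3,m}`
have middle coordinates of the same parity, and the parameter shifts `(k, ℓ) ↦ (k + 1, ℓ - 3)`
(for odd `ℓ`) and `(k, ℓ) ↦ (k, ℓ + 3)` carry points of `E_{3,m}` into `E_{3,m+1}`.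
The three branches of `φ` raise different coordinates, so `φ` is injective on each branch, and a
collision between two branches either contradicts the branch conditions through this parity, or,
through one of the shifts, puts the preimage from the third branch into `E_{3,λ₁}`, where `φ`
takes the first branch.
-/

/-- Membership in the poset `L(3,n)`: triples `(p₁,p₂,p₃)` with `n ≥ p₁ ≥ p₂ ≥ p₃ ≥ 0`. -/
def L3 (n : ℤ) : Set (ℤ × ℤ × ℤ) :=
  {p | p.1 ≤ n ∧ p.2.1 ≤ p.1 ∧ p.2.2 ≤ p.2.1 ∧ 0 ≤ p.2.2}

/-- The starting set `S_{3,m}`. -/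
def S3 (m : ℤ) : Set (ℤ × ℤ × ℤ) :=
  {p | ∃ k ℓ : ℤ, 0 ≤ k ∧ 0 ≤ ℓ ∧ ℓ ≠ 1 ∧ 4 * k + ℓ ≤ m ∧ 2 * (6 * k + ℓ) ≤ 3 * m ∧
    p = (4 * k + ℓ, 2 * k, 0)}

/-- The dual of a partition in `L(3,m)`. -/
def dual (m : ℤ) (p : ℤ × ℤ × ℤ) : ℤ × ℤ × ℤ :=
  (m - p.2.2, m - p.2.1, m - p.1)

/-- The end set `E_{3,m} = {λ* : λ ∈ S_{3,m}}`. -/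
def E3 (m : ℤ) : Set (ℤ × ℤ × ℤ) := dual m '' S3 m

open Classical in
/-- The order matching `φ`. -/
noncomputable def phi (p : ℤ × ℤ × ℤ) : ℤ × ℤ × ℤ :=
  if p ∈ E3 p.1 then
    (p.1 + 1, p.2.1, p.2.2)
  else if (Even (p.2.1 + p.2.2) ∧ (p.1 - 1, p.2.1 + 1, p.2.2) ∉ E3 (p.1 - 1)) ∨
      (¬ Even (p.2.1 + p.2.2) ∧ (p.1 - 1, p.2.1, p.2.2 + 1) ∈ E3 (p.1 - 1)) then
    (p.1, p.2.1 + 1, p.2.2)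
  else
    (p.1, p.2.1, p.2.2 + 1)

lemma mem_E3_iff {m x y z : ℤ} :
    (x, y, z) ∈ E3 m ↔ x = m ∧ ∃ k ℓ : ℤ, 0 ≤ k ∧ 0 ≤ ℓ ∧ ℓ ≠ 1 ∧ 4 * k + ℓ ≤ m ∧
      2 * (6 * k + ℓ) ≤ 3 * m ∧ y = m - 2 * k ∧ z = m - (4 * k + ℓ) := by
  constructor
  · rintro ⟨q, ⟨k, ℓ, h0k, h0ℓ, hℓ, hle, hle', rfl⟩, hq⟩
    simp only [dual, Prod.mk.injEq] at hq
    exact ⟨by omega, k, ℓ, h0k, h0ℓ, hℓ, hle, hle', by omega, by omega⟩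
  · rintro ⟨rfl, k, ℓ, h0k, h0ℓ, hℓ, hle, hle', rfl, rfl⟩
    refine ⟨(4 * k + ℓ, 2 * k, 0), ⟨k, ℓ, h0k, h0ℓ, hℓ, hle, hle', rfl⟩, ?_⟩
    simp only [dual, sub_zero]

lemma not_mem_E3_of_odd_sub {m x y z x' y' z' : ℤ} (h : (x, y, z) ∈ E3 m)
    (hodd : Odd (y - y')) : (x', y', z') ∉ E3 m := by
  intro h'
  obtain ⟨-, k, -, -, -, -, -, -, rfl, -⟩ := mem_E3_iff.1 h
  obtain ⟨-, k', -, -, -, -, -, -, rfl, -⟩ := mem_E3_iff.1 h'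
  obtain ⟨r, hr⟩ := hodd
  omega

lemma mem_E3_succ_of_odd {m y z : ℤ} (h : (m, y, z) ∈ E3 m) (hodd : Odd (y + z))
    (hz : 0 ≤ z) : (m + 1, y - 1, z) ∈ E3 (m + 1) := by
  obtain ⟨-, k, ℓ, h0k, h0ℓ, hℓ, hle, -, rfl, rfl⟩ := mem_E3_iff.1 h
  obtain ⟨r, hr⟩ := hodd
  -- `ℓ` is odd and `ℓ ≠ 1`, so `ℓ - 3` is an admissible parameter
  exact mem_E3_iff.2 ⟨rfl, k + 1, ℓ - 3, by omega, by omega, by omega, by omega, by omega,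
    by omega, by omega⟩

lemma mem_E3_succ_of_two_le {m y z : ℤ} (h : (m, y, z) ∈ E3 m) (hz : 2 ≤ z) :
    (m + 1, y + 1, z - 2) ∈ E3 (m + 1) := by
  obtain ⟨-, k, ℓ, h0k, h0ℓ, -, -, -, rfl, rfl⟩ := mem_E3_iff.1 h
  exact mem_E3_iff.2 ⟨rfl, k, ℓ + 3, by omega, by omega, by omega, by omega, by omega,
    by omega, by omega⟩

/-- The condition of the second branch of `phi`. -/
def RaisesMiddle (a₁ a₂ a₃ : ℤ) : Prop :=
  (Even (a₂ + a₃) ∧ (a₁ - 1, a₂ + 1, a₃) ∉ E3 (a₁ - 1)) ∨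
    (¬ Even (a₂ + a₃) ∧ (a₁ - 1, a₂, a₃ + 1) ∈ E3 (a₁ - 1))

lemma raise_first_ne_raise_middle {a₁ a₂ a₃ b₁ b₂ b₃ : ℤ} (ha : (a₁, a₂, a₃) ∈ E3 a₁)
    (hb : RaisesMiddle b₁ b₂ b₃) : (a₁ + 1, a₂, a₃) ≠ (b₁, b₂ + 1, b₃) := by
  intro e
  simp only [Prod.mk.injEq] at e
  obtain ⟨rfl, rfl, rfl⟩ : b₁ = a₁ + 1 ∧ b₂ = a₂ - 1 ∧ b₃ = a₃ := by omega
  simp only [RaisesMiddle, add_sub_cancel_right, sub_add_cancel] at hb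
  rcases hb with ⟨-, hb⟩ | ⟨-, hb⟩
  · exact hb ha
  · exact not_mem_E3_of_odd_sub ha ⟨0, by ring⟩ hb

lemma raise_first_ne_raise_last {a₁ a₂ a₃ b₁ b₂ b₃ : ℤ} (ha : (a₁, a₂, a₃) ∈ E3 a₁)
    (hb : ¬ RaisesMiddle b₁ b₂ b₃) : (a₁ + 1, a₂, a₃) ≠ (b₁, b₂, b₃ + 1) := by
  intro e
  simp only [Prod.mk.injEq] at e
  obtain ⟨rfl, rfl, rfl⟩ : b₁ = a₁ + 1 ∧ a₂ = b₂ ∧ b₃ = a₃ - 1 := by omega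
  simp only [RaisesMiddle, add_sub_cancel_right, sub_add_cancel, not_or, not_and,
    not_not] at hb
  by_cases hev : Even (a₂ + (a₃ - 1))
  · exact not_mem_E3_of_odd_sub ha ⟨-1, by ring⟩ (hb.1 hev)
  · exact hb.2 hev ha

lemma raise_middle_ne_raise_last {a₁ a₂ a₃ b₁ b₂ b₃ : ℤ} (hb₃ : 0 ≤ b₃)
    (ha : RaisesMiddle a₁ a₂ a₃) (hbE : (b₁, b₂, b₃) ∉ E3 b₁)
    (hb : ¬ RaisesMiddle b₁ b₂ b₃) : (a₁, a₂ + 1, a₃) ≠ (b₁, b₂, b₃ + 1) := by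
  intro e
  simp only [Prod.mk.injEq] at e
  obtain ⟨rfl, rfl, rfl⟩ : a₁ = b₁ ∧ b₂ = a₂ + 1 ∧ b₃ = a₃ - 1 := by omega
  simp only [RaisesMiddle, not_or, not_and, not_not] at hb
  rcases ha with ⟨⟨r, hr⟩, -⟩ | ⟨-, ha⟩
  · have hE := mem_E3_succ_of_odd (hb.1 ⟨r, by omega⟩) ⟨r, by omega⟩ hb₃
    exact hbE (by convert hE using 3 <;> ring)
  · have hE := mem_E3_succ_of_two_le ha (by omega)
    exact hbE (by convert hE using 3 <;> ring)

lemma phi_eq_cases (a₁ a₂ a₃ : ℤ) :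
    ((a₁, a₂, a₃) ∈ E3 a₁ ∧ phi (a₁, a₂, a₃) = (a₁ + 1, a₂, a₃)) ∨
    ((a₁, a₂, a₃) ∉ E3 a₁ ∧ RaisesMiddle a₁ a₂ a₃ ∧ phi (a₁, a₂, a₃) = (a₁, a₂ + 1, a₃)) ∨
    ((a₁, a₂, a₃) ∉ E3 a₁ ∧ ¬ RaisesMiddle a₁ a₂ a₃ ∧
      phi (a₁, a₂, a₃) = (a₁, a₂, a₃ + 1)) := by
  by_cases hE : (a₁, a₂, a₃) ∈ E3 a₁
  · exact .inl ⟨hE, if_pos hE⟩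
  by_cases hM : RaisesMiddle a₁ a₂ a₃
  · exact .inr (.inl ⟨hE, hM, (if_neg hE).trans (if_pos hM)⟩)
  · exact .inr (.inr ⟨hE, hM, (if_neg hE).trans (if_neg hM)⟩)

theorem phi_injOn_general (n : ℤ) :
    Set.InjOn phi (L3 n \ E3 n) := by
  rintro ⟨a₁, a₂, a₃⟩ ⟨⟨-, -, -, ha₃ : 0 ≤ a₃⟩, -⟩ ⟨b₁, b₂, b₃⟩ ⟨⟨-, -, -, hb₃ : 0 ≤ b₃⟩, -⟩ h
  rcases phi_eq_cases a₁ a₂ a₃ with ⟨haE, hφa⟩ | ⟨haE, ha, hφa⟩ | ⟨haE, ha, hφa⟩ <;>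
  rcases phi_eq_cases b₁ b₂ b₃ with ⟨hbE, hφb⟩ | ⟨hbE, hb, hφb⟩ | ⟨hbE, hb, hφb⟩ <;>
  rw [hφa, hφb] at h
  · simp only [Prod.mk.injEq] at h ⊢; omega
  · exact absurd h (raise_first_ne_raise_middle haE hb)
  · exact absurd h (raise_first_ne_raise_last haE hb)
  · exact absurd h.symm (raise_first_ne_raise_middle hbE ha)
  · simp only [Prod.mk.injEq] at h ⊢; omega
  · exact absurd h (raise_middle_ne_raise_last hb₃ ha hbE hb)
  · exact absurd h.symm (raise_first_ne_raise_last hbE ha)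
  · exact absurd h.symm (raise_middle_ne_raise_last ha₃ hb haE ha)
  · simp only [Prod.mk.injEq] at h ⊢; omega

/-- `φ` is injective on `L(3,n) \ E_{3,n}`. -/
theorem phi_injOn (n : ℤ) (hn : 0 < n) :
    Set.InjOn phi (L3 n \ E3 n) :=
  phi_injOn_general n
end

section
/- For all integers k ≥ 1 and c ≥ 0, the partition λ = (4k+c+1, 2k+c+1, c) satisfies: λ ∉ E_{3,λ1}, λ2+λ3 is odd, and (λ1−1, λ2, λ3+1) ∉ E_{3,λ1−1}. -/
theorem even_sub_of_mem_E3 {m : ℤ} {p : ℤ × ℤ × ℤ} (h : p ∈ E3 m) : Even (m - p.2.1) := by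
  obtain ⟨_, ⟨k, _, -, -, -, -, -, rfl⟩, rfl⟩ := h
  exact ⟨k, by simp only [dual]; ring⟩

/-- The dual of `(4k+ℓ, 2k, 0)` is `(m, m-2k, m-4k-ℓ)`, so `ℓ = (p₂ - p₃) - (m - p₂)`; this is
the condition `ℓ ≠ 1` of `S_{3,m}`. -/
theorem sub_ne_sub_add_one_of_mem_E3 {m : ℤ} {p : ℤ × ℤ × ℤ} (h : p ∈ E3 m) :
    p.2.1 - p.2.2 ≠ m - p.2.1 + 1 := by
  obtain ⟨_, ⟨k, ℓ, -, -, hℓ, -, -, rfl⟩, rfl⟩ := h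
  simp only [dual]
  omega

theorem lem_A3_general (k c : ℤ) :
    ((4 * k + c + 1, 2 * k + c + 1, c) : ℤ × ℤ × ℤ) ∉ E3 (4 * k + c + 1) ∧
    Odd ((2 * k + c + 1) + c) ∧
    ((4 * k + c, 2 * k + c + 1, c + 1) : ℤ × ℤ × ℤ) ∉ E3 (4 * k + c) := by
  refine ⟨fun h ↦ sub_ne_sub_add_one_of_mem_E3 h (by ring), ⟨k + c, by ring⟩, fun h ↦ ?_⟩
  have hodd : Odd (4 * k + c - (2 * k + c + 1)) := ⟨k - 1, by ring⟩
  exact Int.not_even_iff_odd.2 hodd (even_sub_of_mem_E3 h)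

/-- Lemma (A₃): for `k ≥ 1`, `c ≥ 0`, `λ = (4k+c+1, 2k+c+1, c)` satisfies
`λ ∉ E_{3,λ₁}`, `λ₂ + λ₃` is odd, and `(λ₁-1, λ₂, λ₃+1) ∉ E_{3,λ₁-1}`. -/
theorem lem_A3 (k c : ℤ) (hk : 1 ≤ k) (hc : 0 ≤ c) :
    ((4 * k + c + 1, 2 * k + c + 1, c) : ℤ × ℤ × ℤ) ∉ E3 (4 * k + c + 1) ∧
    Odd ((2 * k + c + 1) + c) ∧
    ((4 * k + c, 2 * k + c + 1, c + 1) : ℤ × ℤ × ℤ) ∉ E3 (4 * k + c) :=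
  lem_A3_general k c
end
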